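/- Let W be an affine Weyl group acting on V* via the contragredient geometric representation, C_+ the closed fundamental chamber {f ∈ V* : ⟨f, α_i⟩ ≥ 0 for all i}, and C_− = −C_+. Then the closure of the union of all chambers wC_+ and wC_− over w ∈ W equals the whole space V*: specifically, the closure of ⋃_{w∈W} wC_+ is the half-space {f ∈ V* : ⟨f, V^⊥⟩ ≥ 0}, where V^⊥ is the one-dimensional radical of the Coxeter form, and the closure of ⋃_{w∈W} wC_− is the opposite half-space. -/

import Mathlib

/-! Every chamber `w C₊` lies in `{⟨f, δ⟩ ≥ 0}` because `W` fixes `δ` and `δ > 0`. Conversely, let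
`⟨f, δ⟩ = c > 0` and `g = c δ / ⟨δ, δ⟩`, a point of the open chamber at the same `δ`-level; `g`
is the same for every `w f`. As the radical is the line `ℝ δ`, `w f - g = B(x, ·)` for some `x`.
Reflecting in a coordinate `i` with `f_i < -ε` (the numbers game) replaces `x` by
`x - 2 f_i α_i` and lowers `B(x, x) ≥ 0` by `-4 f_i g_i ≥ 4 ε min g`, so some `w f` is `≥ -ε`
coordinatewise. For `ε = t min g` the point `w f + t (g - w f)` lies in `C₊`, and its preimage
under `w` is `f - w⁻¹ B(t x, ·)`; by Cauchy–Schwarz and the `W`-invariance of `B` it lies within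
sup-distance `t √B(x, x)` of `f`. The statement for `C₋` follows by `f ↦ -f`.
-/

variable {ι : Type} [DecidableEq ι] [Fintype ι]

/-- The Coxeter bilinear form `B(α_i, α_j) = -cos (π / m(i,j))` on `V = ι → ℝ` (Mathlib
convention: `M i j = 0` encodes `m(i,j) = ∞`, and `-Real.cos (π / 0) = -1`). -/
noncomputable def coxeterForm (M : CoxeterMatrix ι) (x y : ι → ℝ) : ℝ :=
  ∑ i : ι, ∑ j : ι, x i * y j * (-Real.cos (Real.pi / (M i j : ℝ)))

/-- The generator of the geometric representation: `σ_{s_i}(x) = x - 2 B(α_i, x) α_i`. -/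
noncomputable def coxeterRefl (M : CoxeterMatrix ι) (i : ι) : Module.End ℝ (ι → ℝ) :=
  LinearMap.id -
    (∑ j : ι, (2 * (-Real.cos (Real.pi / (M i j : ℝ)))) • LinearMap.proj j).smulRight
      (Pi.single i 1)

/-- The canonical pairing between `V* = ι → ℝ` and `V = ι → ℝ`. -/
def pairing (x y : ι → ℝ) : ℝ := ∑ i : ι, x i * y i

/-- The contragredient action of `w ∈ W` on `V* = ι → ℝ`:
`⟨σ*_w f, α_i⟩ = ⟨f, σ_{w⁻¹} α_i⟩`. -/
noncomputable def dualAct (M : CoxeterMatrix ι) (σ : M.Group →* (Module.End ℝ (ι → ℝ))ˣ)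
    (w : M.Group) (f : ι → ℝ) : ι → ℝ :=
  fun i => pairing f ((σ w⁻¹ : Module.End ℝ (ι → ℝ)) (Pi.single i 1))

open Matrix

lemma Matrix.exists_mulVec_eq_of_dotProduct_eq_zero {κ K : Type*} [Fintype κ] [Field K]
    {A : Matrix κ κ K} {δ : κ → K} (hker : ∀ x, A *ᵥ x = 0 → ∃ t : K, x = t • δ)
    (hrange : ∀ x, A *ᵥ x ⬝ᵥ δ = 0) (hδ : δ ≠ 0) {u : κ → K} (hu : u ⬝ᵥ δ = 0) :
    ∃ x, A *ᵥ x = u := by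
  classical
  let ℓ : Module.Dual K (κ → K) := (dotProductBilin K K).flip δ
  have hℓ : ℓ ≠ 0 := by
    obtain ⟨i, hi⟩ := Function.ne_iff.1 hδ
    exact fun h => hi (by simpa [ℓ] using LinearMap.congr_fun h (Pi.single i 1))
  have hle : LinearMap.range A.mulVecLin ≤ LinearMap.ker ℓ := by
    rintro _ ⟨x, rfl⟩
    simpa [ℓ] using hrange x
  have hker_le : LinearMap.ker A.mulVecLin ≤ K ∙ δ := fun x hx => by
    obtain ⟨t, rfl⟩ := hker x hx
    exact Submodule.smul_mem _ t (Submodule.mem_span_singleton_self δ)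
  have hrank := LinearMap.finrank_range_add_finrank_ker A.mulVecLin
  have hker_rank := Submodule.finrank_mono hker_le
  rw [finrank_span_singleton hδ] at hker_rank
  have hℓ_rank := Module.Dual.finrank_ker_add_one_of_ne_zero hℓ
  have heq := Submodule.eq_of_le_of_finrank_le hle (by omega)
  obtain ⟨x, hx⟩ : u ∈ LinearMap.range A.mulVecLin := heq ▸ (by simpa [ℓ] using hu)
  exact ⟨x, hx⟩

noncomputable def coxeterGram {B : Type*} (M : CoxeterMatrix B) : Matrix B B ℝ :=
  Matrix.of fun i j => -Real.cos (Real.pi / (M i j : ℝ))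

lemma coxeterGram_isSymm {B : Type*} (M : CoxeterMatrix B) : (coxeterGram M).IsSymm :=
  Matrix.IsSymm.ext fun i j => by simp [coxeterGram, M.symmetric]

lemma coxeterGram_apply_self {B : Type*} (M : CoxeterMatrix B) (i : B) :
    coxeterGram M i i = 1 := by
  simp [coxeterGram]

lemma pairing_eq_dotProduct {B : Type} [Fintype B] (x y : B → ℝ) : pairing x y = x ⬝ᵥ y := rfl

def IsGeometricRep (M : CoxeterMatrix ι) (σ : M.Group →* (Module.End ℝ (ι → ℝ))ˣ) : Prop :=
  ∀ i, (σ (M.simple i) : Module.End ℝ (ι → ℝ)) = coxeterRefl M i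

section Form

variable (M : CoxeterMatrix ι)

lemma coxeterForm_eq_toBilin' (x y : ι → ℝ) :
    coxeterForm M x y = (coxeterGram M).toBilin' x y := by
  simp [coxeterForm, Matrix.toBilin'_apply, coxeterGram, mul_right_comm]

lemma coxeterForm_comm (x y : ι → ℝ) : coxeterForm M x y = coxeterForm M y x := by
  simp only [coxeterForm_eq_toBilin']
  exact ((Matrix.isSymm_toBilin'_iff_isSymm.2 (coxeterGram_isSymm M)).eq x y)

lemma coxeterForm_single_left (i : ι) (x : ι → ℝ) :
    coxeterForm M (Pi.single i 1) x = (coxeterGram M *ᵥ x) i := by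
  simp [coxeterForm_eq_toBilin', Matrix.toBilin'_apply']

lemma coxeterForm_single_single (i : ι) :
    coxeterForm M (Pi.single i 1) (Pi.single i 1) = 1 := by
  simp [coxeterForm_eq_toBilin', coxeterGram_apply_self]

lemma coxeterGram_mulVec_dotProduct (x y : ι → ℝ) :
    coxeterGram M *ᵥ x ⬝ᵥ y = coxeterForm M x y := by
  rw [coxeterForm_eq_toBilin', Matrix.toBilin'_apply', dotProduct_mulVec, ← mulVec_transpose,
    coxeterGram_isSymm M, dotProduct_comm]

lemma coxeterForm_sq_le (hPSD : ∀ x : ι → ℝ, 0 ≤ coxeterForm M x x) (x y : ι → ℝ) :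
    coxeterForm M x y ^ 2 ≤ coxeterForm M x x * coxeterForm M y y := by
  simp only [coxeterForm_eq_toBilin'] at hPSD ⊢
  exact LinearMap.BilinForm.apply_sq_le_of_symm _ hPSD (LinearMap.BilinForm.isSymm_iff.1
    (Matrix.isSymm_toBilin'_iff_isSymm.2 (coxeterGram_isSymm M))) x y

lemma norm_coxeterGram_mulVec_le (hPSD : ∀ x : ι → ℝ, 0 ≤ coxeterForm M x x) (z : ι → ℝ) :
    ‖coxeterGram M *ᵥ z‖ ≤ √(coxeterForm M z z) := by
  refine (pi_norm_le_iff_of_nonneg (Real.sqrt_nonneg _)).2 fun j => ?_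
  rw [Real.norm_eq_abs, ← Real.sqrt_sq_eq_abs]
  gcongr
  simpa [coxeterForm_single_left, coxeterGram_apply_self] using
    coxeterForm_sq_le M hPSD (Pi.single j 1) z

end Form

section GeometricRepresentation

variable (M : CoxeterMatrix ι)

lemma coxeterRefl_apply (i : ι) (x : ι → ℝ) :
    coxeterRefl M i x = x - (2 * coxeterForm M (Pi.single i 1) x) • Pi.single i 1 := by
  simp [coxeterRefl, coxeterForm_single_left, mulVec, dotProduct, Finset.mul_sum, coxeterGram,
    mul_assoc]

lemma coxeterForm_coxeterRefl (i : ι) (x y : ι → ℝ) :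
    coxeterForm M (coxeterRefl M i x) (coxeterRefl M i y) = coxeterForm M x y := by
  simp only [coxeterRefl_apply, coxeterForm_eq_toBilin', map_sub, map_smul, LinearMap.sub_apply,
    LinearMap.smul_apply, smul_eq_mul]
  simp only [← coxeterForm_eq_toBilin', coxeterForm_single_single, coxeterForm_comm M x]
  ring

variable {σ : M.Group →* (Module.End ℝ (ι → ℝ))ˣ}

lemma geomRep_induction (hσ : IsGeometricRep M σ) {p : Module.End ℝ (ι → ℝ) → Prop}
    (refl : ∀ i, p (coxeterRefl M i)) (one : p 1) (mul : ∀ A B, p A → p B → p (A * B))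
    (w : M.Group) : p (σ w) :=
  M.toCoxeterSystem.simple_induction (p := fun w => p (σ w)) w
    (fun i => by simpa [hσ i] using refl i) (by simpa using one)
    (fun _ _ hw hw' => by simpa using mul _ _ hw hw')

lemma coxeterForm_geomRep (hσ : IsGeometricRep M σ) (w : M.Group) (x y : ι → ℝ) :
    coxeterForm M ((σ w : Module.End ℝ (ι → ℝ)) x) ((σ w : Module.End ℝ (ι → ℝ)) y) =
      coxeterForm M x y :=
  geomRep_induction M hσ (p := fun A => ∀ x y, coxeterForm M (A x) (A y) = coxeterForm M x y)
    (coxeterForm_coxeterRefl M) (fun _ _ => rfl) (fun _ _ hA hB x y => (hA _ _).trans (hB x y))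
    w x y

lemma geomRep_apply_eq_self_of_radical (hσ : IsGeometricRep M σ)
    {δ : ι → ℝ} (hδrad : ∀ y, coxeterForm M δ y = 0) (w : M.Group) :
    (σ w : Module.End ℝ (ι → ℝ)) δ = δ :=
  geomRep_induction M hσ (p := fun A => A δ = δ)
    (fun i => by rw [coxeterRefl_apply, coxeterForm_comm, hδrad]; simp) rfl
    (fun _ _ hA hB => by rw [Module.End.mul_apply, hB, hA]) w

end GeometricRepresentation

section Contragredient

variable (M : CoxeterMatrix ι) {σ : M.Group →* (Module.End ℝ (ι → ℝ))ˣ}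

lemma dualAct_eq_vecMul (w : M.Group) (f : ι → ℝ) :
    dualAct M σ w f = f ᵥ* LinearMap.toMatrix' (σ w⁻¹ : Module.End ℝ (ι → ℝ)) := rfl

lemma dualAct_apply (w : M.Group) (f : ι → ℝ) (j : ι) :
    dualAct M σ w f j = f ⬝ᵥ (σ w⁻¹ : Module.End ℝ (ι → ℝ)) (Pi.single j 1) := rfl

lemma dualAct_dotProduct (w : M.Group) (f v : ι → ℝ) :
    dualAct M σ w f ⬝ᵥ v = f ⬝ᵥ (σ w⁻¹ : Module.End ℝ (ι → ℝ)) v := by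
  rw [dualAct_eq_vecMul, ← dotProduct_mulVec, LinearMap.toMatrix'_mulVec]

lemma dualAct_one (f : ι → ℝ) : dualAct M σ 1 f = f := by
  simp [dualAct_eq_vecMul]

lemma dualAct_mul (w w' : M.Group) (f : ι → ℝ) :
    dualAct M σ (w * w') f = dualAct M σ w (dualAct M σ w' f) := by
  simp [dualAct_eq_vecMul, vecMul_vecMul, LinearMap.toMatrix'_mul]

lemma dualAct_inv_dualAct (w : M.Group) (f : ι → ℝ) :
    dualAct M σ w⁻¹ (dualAct M σ w f) = f := by
  rw [← dualAct_mul, inv_mul_cancel, dualAct_one]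

lemma dualAct_sub (w : M.Group) (f f' : ι → ℝ) :
    dualAct M σ w (f - f') = dualAct M σ w f - dualAct M σ w f' := by
  simp [dualAct_eq_vecMul, sub_vecMul]

lemma dualAct_neg (w : M.Group) (f : ι → ℝ) : dualAct M σ w (-f) = -dualAct M σ w f := by
  simp [dualAct_eq_vecMul, neg_vecMul]

lemma dualAct_simple (hσ : IsGeometricRep M σ) (i : ι) (f : ι → ℝ) :
    dualAct M σ (M.simple i) f = f - (2 * f i) • coxeterGram M *ᵥ Pi.single i 1 := by
  ext j
  rw [dualAct_apply, ← M.toCoxeterSystem_simple, M.toCoxeterSystem.inv_simple,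
    M.toCoxeterSystem_simple, hσ, coxeterRefl_apply, coxeterForm_single_left]
  simp [(coxeterGram_isSymm M).apply i j, mul_right_comm]

lemma dualAct_coxeterGram_mulVec (hσ : IsGeometricRep M σ) (w : M.Group) (z : ι → ℝ) :
    dualAct M σ w (coxeterGram M *ᵥ z) = coxeterGram M *ᵥ (σ w : Module.End ℝ (ι → ℝ)) z := by
  ext j
  have hinv : (σ w : Module.End ℝ (ι → ℝ)) ((σ w⁻¹ : Module.End ℝ (ι → ℝ)) (Pi.single j 1)) =
      Pi.single j 1 := by
    rw [← Module.End.mul_apply, ← Units.val_mul, ← map_mul, mul_inv_cancel, map_one]; rfl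
  rw [dualAct_apply, coxeterGram_mulVec_dotProduct, ← coxeterForm_geomRep M hσ w, hinv,
    coxeterForm_comm, coxeterForm_single_left]

end Contragredient

section NumbersGame

variable (M : CoxeterMatrix ι) {σ : M.Group →* (Module.End ℝ (ι → ℝ))ˣ}

lemma coxeterForm_sub_smul_single (x : ι → ℝ) (a : ℝ) (i : ι) :
    coxeterForm M (x - a • Pi.single i 1) (x - a • Pi.single i 1) =
      coxeterForm M x x - 2 * a * (coxeterGram M *ᵥ x) i + a ^ 2 := by
  simp only [coxeterForm_eq_toBilin', map_sub, map_smul, LinearMap.sub_apply,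
    LinearMap.smul_apply, smul_eq_mul]
  simp only [← coxeterForm_eq_toBilin', coxeterForm_single_single, coxeterForm_comm M x]
  rw [coxeterForm_single_left]
  ring

lemma numbersGame_step (hσ : IsGeometricRep M σ) {f g x : ι → ℝ}
    (hfx : f - g = coxeterGram M *ᵥ x) (i : ι) :
    dualAct M σ (M.simple i) f - g = coxeterGram M *ᵥ (x - (2 * f i) • Pi.single i 1) ∧
      coxeterForm M (x - (2 * f i) • Pi.single i 1) (x - (2 * f i) • Pi.single i 1) =
        coxeterForm M x x + 4 * f i * g i := by
  have hxi : (coxeterGram M *ᵥ x) i = f i - g i := by rw [← hfx]; rfl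
  constructor
  · rw [dualAct_simple M hσ, mulVec_sub, mulVec_smul, ← hfx]
    abel
  · rw [coxeterForm_sub_smul_single, hxi]
    ring

lemma exists_dualAct_ge_neg (hσ : IsGeometricRep M σ)
    (hPSD : ∀ x : ι → ℝ, 0 ≤ coxeterForm M x x) {g : ι → ℝ} {m ε : ℝ} (hm : 0 < m)
    (hgm : ∀ i, m ≤ g i) (hε : 0 < ε) {f x : ι → ℝ} (hfx : f - g = coxeterGram M *ᵥ x) :
    ∃ w x', dualAct M σ w f - g = coxeterGram M *ᵥ x' ∧
      coxeterForm M x' x' ≤ coxeterForm M x x ∧ ∀ i, -ε ≤ dualAct M σ w f i := by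
  obtain ⟨n, hn⟩ := exists_nat_gt (coxeterForm M x x / (4 * m * ε))
  rw [div_lt_iff₀ (by positivity)] at hn
  induction n generalizing f x with
  | zero => simp at hn; linarith [hPSD x]
  | succ n ih =>
    by_cases hf : ∀ i, -ε ≤ f i
    · exact ⟨1, x, by rwa [dualAct_one], le_rfl, by simpa [dualAct_one]⟩
    obtain ⟨i, hi⟩ := not_forall.1 hf
    rw [not_le] at hi
    obtain ⟨hfx', hform⟩ := numbersGame_step M hσ hfx i
    have hdrop : f i * g i ≤ -(ε * m) := by nlinarith [hgm i]
    obtain ⟨w, x', hx', hle, hneg⟩ := ih hfx' (by rw [hform]; push_cast at hn; nlinarith)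
    refine ⟨w * M.simple i, x', by rwa [dualAct_mul], hle.trans ?_, by simpa [dualAct_mul]⟩
    rw [hform]
    nlinarith

lemma norm_dualAct_coxeterGram_mulVec_le (hσ : IsGeometricRep M σ)
    (hPSD : ∀ x : ι → ℝ, 0 ≤ coxeterForm M x x) (w : M.Group) (z : ι → ℝ) :
    ‖dualAct M σ w (coxeterGram M *ᵥ z)‖ ≤ √(coxeterForm M z z) := by
  rw [dualAct_coxeterGram_mulVec M hσ, ← coxeterForm_geomRep M hσ w z z]
  exact norm_coxeterGram_mulVec_le M hPSD _

end NumbersGame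

section TitsCone

variable (M : CoxeterMatrix ι) {σ : M.Group →* (Module.End ℝ (ι → ℝ))ˣ} {δ : ι → ℝ}

lemma exists_mem_iUnion_dualAct_dist_le (hσ : IsGeometricRep M σ)
    (hPSD : ∀ x : ι → ℝ, 0 ≤ coxeterForm M x x) {g : ι → ℝ} {m : ℝ} (hm : 0 < m)
    (hgm : ∀ i, m ≤ g i) {f x : ι → ℝ} (hfx : f - g = coxeterGram M *ᵥ x) {t : ℝ}
    (ht0 : 0 < t) (ht1 : t ≤ 1) :
    ∃ p ∈ ⋃ w : M.Group, dualAct M σ w '' {f : ι → ℝ | ∀ i, 0 ≤ f i},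
      dist f p ≤ t * √(coxeterForm M x x) := by
  obtain ⟨w, x', hx', hx'x, hneg⟩ := exists_dualAct_ge_neg M hσ hPSD hm hgm (mul_pos ht0 hm) hfx
  set f' := dualAct M σ w f
  refine ⟨dualAct M σ w⁻¹ (f' + t • (g - f')), Set.mem_iUnion.2 ⟨w⁻¹, _, fun i => ?_, rfl⟩, ?_⟩
  · simp only [Pi.add_apply, Pi.smul_apply, Pi.sub_apply, smul_eq_mul]
    nlinarith [mul_le_mul_of_nonneg_left (hneg i) (sub_nonneg.2 ht1),
      mul_le_mul_of_nonneg_left (hgm i) ht0.le, mul_pos (mul_pos ht0 ht0) hm]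
  have hdiff : f - dualAct M σ w⁻¹ (f' + t • (g - f')) =
      dualAct M σ w⁻¹ (coxeterGram M *ᵥ (t • x')) := by
    rw [mulVec_smul, ← hx', ← dualAct_inv_dualAct M w f, ← dualAct_sub]
    congr 1
    module
  calc dist f (dualAct M σ w⁻¹ (f' + t • (g - f')))
      ≤ √(coxeterForm M (t • x') (t • x')) := by
        rw [dist_eq_norm, hdiff]
        exact norm_dualAct_coxeterGram_mulVec_le M hσ hPSD _ _
    _ = t * √(coxeterForm M x' x') := by
        simp only [coxeterForm_eq_toBilin', map_smul, LinearMap.smul_apply, smul_eq_mul]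
        rw [← mul_assoc, ← sq, Real.sqrt_mul (sq_nonneg t), Real.sqrt_sq ht0.le,
          ← coxeterForm_eq_toBilin']
    _ ≤ t * √(coxeterForm M x x) := by gcongr

lemma mem_closure_iUnion_dualAct_of_dotProduct_pos (hσ : IsGeometricRep M σ)
    (hPSD : ∀ x : ι → ℝ, 0 ≤ coxeterForm M x x)
    (hδpos : ∀ i, 0 < δ i) (hδrad : ∀ y, coxeterForm M δ y = 0)
    (hradspan : ∀ v : ι → ℝ, (∀ y, coxeterForm M v y = 0) → ∃ t : ℝ, v = t • δ)
    {f : ι → ℝ} (hf : 0 < f ⬝ᵥ δ) :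
    f ∈ closure (⋃ w : M.Group, dualAct M σ w '' {f : ι → ℝ | ∀ i, 0 ≤ f i}) := by
  have hne : (Finset.univ : Finset ι).Nonempty := Finset.nonempty_of_sum_ne_zero hf.ne'
  have hδδ : 0 < δ ⬝ᵥ δ := Finset.sum_pos (fun i _ => mul_pos (hδpos i) (hδpos i)) hne
  set g := (f ⬝ᵥ δ / δ ⬝ᵥ δ) • δ with hg
  set m := Finset.univ.inf' hne g
  have hm : 0 < m := (Finset.lt_inf'_iff hne).2 fun i _ => mul_pos (div_pos hf hδδ) (hδpos i)
  have hgm : ∀ i, m ≤ g i := fun i => Finset.inf'_le g (Finset.mem_univ i)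
  obtain ⟨x, hx⟩ := exists_mulVec_eq_of_dotProduct_eq_zero (A := coxeterGram M) (u := f - g)
    (fun x hx => hradspan x fun y => by rw [← coxeterGram_mulVec_dotProduct, hx, zero_dotProduct])
    (fun x => by rw [coxeterGram_mulVec_dotProduct, coxeterForm_comm, hδrad])
    (by rintro rfl; simp at hδδ)
    (by rw [sub_dotProduct, hg, smul_dotProduct, smul_eq_mul, div_mul_cancel₀ _ hδδ.ne', sub_self])
  rw [Metric.mem_closure_iff]
  intro r hr
  have hD : 0 ≤ √(coxeterForm M x x) := Real.sqrt_nonneg _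
  obtain ⟨p, hp, hfp⟩ := exists_mem_iUnion_dualAct_dist_le M hσ hPSD hm hgm hx.symm
    (t := r / (r + √(coxeterForm M x x))) (by positivity)
    (div_le_one_of_le₀ (by linarith) (by positivity))
  refine ⟨p, hp, hfp.trans_lt ?_⟩
  rw [div_mul_eq_mul_div, div_lt_iff₀ (by positivity)]
  nlinarith

open Filter Topology in
lemma closure_iUnion_dualAct_nonneg (hσ : IsGeometricRep M σ)
    (hPSD : ∀ x : ι → ℝ, 0 ≤ coxeterForm M x x)
    (hδpos : ∀ i, 0 < δ i) (hδrad : ∀ y, coxeterForm M δ y = 0)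
    (hradspan : ∀ v : ι → ℝ, (∀ y, coxeterForm M v y = 0) → ∃ t : ℝ, v = t • δ) :
    closure (⋃ w : M.Group, dualAct M σ w '' {f : ι → ℝ | ∀ i, 0 ≤ f i}) =
      {f | 0 ≤ f ⬝ᵥ δ} := by
  refine subset_antisymm (closure_minimal ?_ ?_) fun f hf => ?_
  · rintro _ ⟨_, ⟨w, rfl⟩, f, hf, rfl⟩
    rw [Set.mem_ofPred_eq, dualAct_dotProduct, geomRep_apply_eq_self_of_radical M hσ hδrad]
    exact Finset.sum_nonneg fun i _ => mul_nonneg (hf i) (hδpos i).le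
  · exact isClosed_le continuous_const (continuous_id.dotProduct continuous_const)
  rcases isEmpty_or_nonempty ι
  · exact subset_closure (Set.mem_iUnion.2 ⟨1, f, isEmptyElim, dualAct_one M f⟩)
  have hδδ : 0 < δ ⬝ᵥ δ :=
    Finset.sum_pos (fun i _ => mul_pos (hδpos i) (hδpos i)) Finset.univ_nonempty
  have hlim : Tendsto (fun t : ℝ => f + t • δ) (𝓝[>] 0) (𝓝 f) :=
    ((continuous_const.add (continuous_id.smul continuous_const)).tendsto' 0 f
      (by simp)).mono_left nhdsWithin_le_nhds
  refine isClosed_closure.mem_of_tendsto hlim (eventually_nhdsWithin_of_forall fun t ht => ?_)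
  refine mem_closure_iUnion_dualAct_of_dotProduct_pos M hσ hPSD hδpos hδrad hradspan ?_
  rw [add_dotProduct, smul_dotProduct, smul_eq_mul]
  exact add_pos_of_nonneg_of_pos hf (mul_pos ht hδδ)

lemma iUnion_dualAct_nonpos :
    ⋃ w : M.Group, dualAct M σ w '' {f : ι → ℝ | ∀ i, f i ≤ 0} =
      -⋃ w : M.Group, dualAct M σ w '' {f : ι → ℝ | ∀ i, 0 ≤ f i} := by
  ext f
  simp only [Set.mem_neg, Set.mem_iUnion, Set.mem_image, Set.mem_ofPred_eq]
  refine exists_congr fun w => ⟨fun ⟨g, hg, hgf⟩ => ⟨-g, fun i => ?_, ?_⟩,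
    fun ⟨g, hg, hgf⟩ => ⟨-g, fun i => ?_, ?_⟩⟩
  · simpa using hg i
  · rw [dualAct_neg, hgf]
  · simpa using hg i
  · rw [dualAct_neg, hgf, neg_neg]

end TitsCone

/-- Let `W` be an affine Coxeter group (the Coxeter form is positive semidefinite with
one-dimensional radical spanned by a vector `δ` with positive coordinates), acting on
`V* = ι → ℝ` by the contragredient of the geometric representation. Let
`C₊ = {f : ⟨f, α_i⟩ ≥ 0 ∀ i}` be the closed fundamental chamber and `C₋ = -C₊`. Then the closure
of `⋃_w wC₊` is the half-space `{f : ⟨f, δ⟩ ≥ 0}`, the closure of `⋃_w wC₋` is the opposite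
half-space `{f : ⟨f, δ⟩ ≤ 0}`, and the closure of the union of all these chambers is all
of `V*`. -/
theorem affine_tits_cone_halfspace (M : CoxeterMatrix ι)
    (σ : M.Group →* (Module.End ℝ (ι → ℝ))ˣ)
    (hσ : ∀ i, (σ (M.simple i) : Module.End ℝ (ι → ℝ)) = coxeterRefl M i)
    (hPSD : ∀ x : ι → ℝ, 0 ≤ coxeterForm M x x)
    (δ : ι → ℝ) (hδpos : ∀ i, 0 < δ i) (hδrad : ∀ y, coxeterForm M δ y = 0)
    (hradspan : ∀ v : ι → ℝ, (∀ y, coxeterForm M v y = 0) → ∃ t : ℝ, v = t • δ) :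
    closure (⋃ w : M.Group, dualAct M σ w '' {f : ι → ℝ | ∀ i, 0 ≤ f i})
        = {f : ι → ℝ | 0 ≤ pairing f δ} ∧
    closure (⋃ w : M.Group, dualAct M σ w '' {f : ι → ℝ | ∀ i, f i ≤ 0})
        = {f : ι → ℝ | pairing f δ ≤ 0} ∧
    closure ((⋃ w : M.Group, dualAct M σ w '' {f : ι → ℝ | ∀ i, 0 ≤ f i}) ∪
        (⋃ w : M.Group, dualAct M σ w '' {f : ι → ℝ | ∀ i, f i ≤ 0})) = Set.univ := by
  have hplus := closure_iUnion_dualAct_nonneg M hσ hPSD hδpos hδrad hradspan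
  have hminus : closure (⋃ w : M.Group, dualAct M σ w '' {f : ι → ℝ | ∀ i, f i ≤ 0}) =
      {f | f ⬝ᵥ δ ≤ 0} := by
    rw [iUnion_dualAct_nonpos, ← neg_closure, hplus]
    ext f
    simp [neg_dotProduct]
  simp only [pairing_eq_dotProduct]
  refine ⟨hplus, hminus, ?_⟩
  rw [closure_union, hplus, hminus]
  exact Set.eq_univ_of_forall fun f => le_total 0 (f ⬝ᵥ δ)
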